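/- (Computation in the proof of Lemma 18.) Let x, y be real numbers with 0 < x < y, and let C = {z ∈ ℍ : |z − (x+y)/2| = (y−x)/2} be the semicircular geodesic of ℍ with endpoints x and y. Then the infimum of the hyperbolic distances dist(p, q) over p in the imaginary-axis geodesic I and q ∈ C equals arcosh((y + x)/(y − x)). -/

import Mathlib

open scoped UpperHalfPlane

/-- The inverse hyperbolic cosine. -/
noncomputable def arcosh (x : ℝ) : ℝ := Real.log (x + Real.sqrt (x ^ 2 - 1))

/-!
With `c = (x + y) / 2` and `r = (y - x) / 2`, take `p = t i` on the imaginary axis and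
`q = u + v i` with `(u - c)² + v² = r²`. Then `2tv cosh d(p, q) = u² + t² + v²` and
`r (r (u² + t² + v²) - 2ctv) = (rt - cv)² + (c (u - c) + r²)²`,
so `r cosh d(p, q) ≥ c`, with equality for `t = √(c² - r²)`, `u = t² / c`, `v = rt / c`.
The infimum is therefore attained and equals `arcosh (c / r)`.
-/

open UpperHalfPlane

lemma arcosh_eq_real_arcosh : arcosh = Real.arcosh := rfl

lemma Complex.norm_sub_ofReal_sq (z : ℂ) (c : ℝ) : ‖z - c‖ ^ 2 = (z.re - c) ^ 2 + z.im ^ 2 := by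
  rw [Complex.sq_norm, Complex.normSq_apply]
  simp only [Complex.sub_re, Complex.sub_im, Complex.ofReal_re, Complex.ofReal_im, sub_zero]
  ring

lemma le_mul_cosh_dist_of_re_eq_zero {c r : ℝ} {p q : ℍ} (hp : p.re = 0)
    (hq : ‖(q : ℂ) - c‖ = r) : c ≤ r * Real.cosh (dist p q) := by
  have hcircle : (q.re - c) ^ 2 + q.im ^ 2 = r ^ 2 := by
    rw [← hq, Complex.norm_sub_ofReal_sq, coe_re, coe_im]
  have hr : 0 < r := by nlinarith [q.im_pos, norm_nonneg ((q : ℂ) - c)]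
  have key : r * (r * ((0 - q.re) ^ 2 + p.im ^ 2 + q.im ^ 2) - c * (2 * p.im * q.im)) =
      (r * p.im - c * q.im) ^ 2 + (c * (q.re - c) + r ^ 2) ^ 2 := by
    linear_combination (r ^ 2 - c ^ 2) * hcircle
  have hnonneg : 0 ≤ r * ((0 - q.re) ^ 2 + p.im ^ 2 + q.im ^ 2) - c * (2 * p.im * q.im) :=
    nonneg_of_mul_nonneg_right (key ▸ by positivity) hr
  rw [cosh_dist', hp, mul_div_assoc', le_div_iff₀ (by positivity)]
  linarith

lemma exists_re_eq_zero_mul_cosh_dist_eq {c r : ℝ} (hr : 0 < r) (hrc : r < c) :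
    ∃ p q : ℍ, p.re = 0 ∧ ‖(q : ℂ) - c‖ = r ∧ r * Real.cosh (dist p q) = c := by
  set k := √(c ^ 2 - r ^ 2)
  have hk : 0 < k := Real.sqrt_pos.2 (by nlinarith)
  have hk2 : k ^ 2 = c ^ 2 - r ^ 2 := Real.sq_sqrt (by nlinarith)
  have hc : 0 < c := hr.trans hrc
  refine ⟨⟨⟨0, k⟩, hk⟩, ⟨⟨k ^ 2 / c, r * k / c⟩, by positivity⟩, rfl, ?_, ?_⟩
  · refine (sq_eq_sq₀ (norm_nonneg _) hr.le).1 ?_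
    rw [Complex.norm_sub_ofReal_sq]
    show (k ^ 2 / c - c) ^ 2 + (r * k / c) ^ 2 = r ^ 2
    field_simp
    linear_combination (k ^ 2 - c ^ 2) * hk2
  · rw [cosh_dist']
    show r * (((0 - k ^ 2 / c) ^ 2 + k ^ 2 + (r * k / c) ^ 2) / (2 * k * (r * k / c))) = c
    field_simp
    linear_combination k ^ 2 * hk2

theorem isLeast_dist_imaginaryAxis_circle {c r : ℝ} (hr : 0 < r) (hrc : r < c) :
    IsLeast (Set.image2 dist {z : ℍ | z.re = 0} {z : ℍ | ‖(z : ℂ) - c‖ = r})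
      (arcosh (c / r)) := by
  have hcr : 0 < c / r := div_pos (hr.trans hrc) hr
  rw [arcosh_eq_real_arcosh]
  constructor
  · obtain ⟨p, q, hp, hq, hcosh⟩ := exists_re_eq_zero_mul_cosh_dist_eq hr hrc
    refine ⟨p, hp, q, hq, ?_⟩
    rw [← hcosh, mul_div_cancel_left₀ _ hr.ne', Real.arcosh_cosh dist_nonneg]
  · rintro _ ⟨p, hp, q, hq, rfl⟩
    have hle : c / r ≤ Real.cosh (dist p q) :=
      (div_le_iff₀' hr).2 (le_mul_cosh_dist_of_re_eq_zero hp hq)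
    rw [← Real.arcosh_cosh (dist_nonneg (x := p) (y := q))]
    exact (Real.arcosh_le_arcosh hcr (Real.cosh_pos _)).2 hle

/-- Computation in the proof of Lemma 18: for `0 < x < y`, the distance between the
imaginary-axis geodesic and the semicircular geodesic with endpoints `x` and `y`
equals `arcosh ((y + x)/(y - x))`. -/
theorem dist_imaginary_axis_to_semicircle (x y : ℝ) (hx : 0 < x) (hxy : x < y) :
    sInf (Set.image2 dist {z : ℍ | z.re = 0}
        {z : ℍ | ‖(z : ℂ) - (((x + y) / 2 : ℝ) : ℂ)‖ = (y - x) / 2}) =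
      arcosh ((y + x) / (y - x)) := by
  have hratio : (y + x) / (y - x) = ((x + y) / 2) / ((y - x) / 2) := by
    rw [div_div_div_cancel_right₀ two_ne_zero, add_comm]
  rw [hratio]
  exact (isLeast_dist_imaginaryAxis_circle (by linarith) (by linarith)).csInf_eq
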